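/- arXiv:1309.7528 — 3 statements merged into one kernel-verified Lean document; each statement's English description precedes it below -/
import Mathlib

section
/- Fix a probability distribution Q_Y on 𝒴 whose support contains the support of P_Y. The function f(θ) := θ·H_{1+θ}(P_XY|Q_Y) = −log Σ_{x,y} P_XY(x,y)^{1+θ} Q_Y(y)^{−θ}, extended by f(0)=0, is concave on (−1,∞); moreover f is strictly concave on (−1,∞) if and only if the variance of the random variable log(Q_Y(Y)/P_XY(X,Y)) under (X,Y)∼P_XY is strictly positive. -/
open Real Filter

/-- Marginal distribution on `𝒴`. -/
noncomputable def margY {𝒳 𝒴 : Type*} [Fintype 𝒳] (P : 𝒳 × 𝒴 → ℝ) (y : 𝒴) : ℝ :=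
  ∑ x : 𝒳, P (x, y)

/-- `θ · H_{1+θ}(P_{XY}|Q_Y) = - log Σ P(x,y)^{1+θ} Q(y)^{-θ}` (which equals `0` at `θ = 0`). -/
noncomputable def thetaCondRenyiQ {𝒳 𝒴 : Type*} [Fintype 𝒳] [Fintype 𝒴]
    (P : 𝒳 × 𝒴 → ℝ) (Q : 𝒴 → ℝ) (θ : ℝ) : ℝ :=
  -Real.log (∑ x : 𝒳, ∑ y : 𝒴,
    if 0 < P (x, y) then P (x, y) ^ (1 + θ) * Q y ^ (-θ) else 0)

/-- Variance of `log (Q(Y)/P(X,Y))` under `P`. -/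
noncomputable def varLogQ {𝒳 𝒴 : Type*} [Fintype 𝒳] [Fintype 𝒴]
    (P : 𝒳 × 𝒴 → ℝ) (Q : 𝒴 → ℝ) : ℝ :=
  (∑ x : 𝒳, ∑ y : 𝒴,
    if 0 < P (x, y) then P (x, y) * (Real.log (Q y / P (x, y))) ^ 2 else 0)
  - (∑ x : 𝒳, ∑ y : 𝒴,
    if 0 < P (x, y) then P (x, y) * Real.log (Q y / P (x, y)) else 0) ^ 2

/-!
On the support of `P`, write `a = log (P / Q)`; then `θ · H_{1+θ}(P|Q) = -log ∑ P e^{θ a}`, minus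
the cumulant generating function of `a` under `P`. Its second derivative is minus the variance of
`a` under the tilted weights `P e^{θ a}`, and by the Lagrange identity
`(∑ u a²)(∑ u) - (∑ u a)² = ½ ∑∑ u_p u_q (a_p - a_q)²` that variance is positive, for one `θ` or
for all of them, exactly when `a` is not constant on the support. When `a` is constant the
function is affine, hence not strictly concave.
-/

open Finset

section ScaledVariance

variable {ι : Type*} (s : Finset ι) (u a : ι → ℝ)

/-- `(∑ u)²` times the variance of `a` under the normalized weights `u / ∑ u`. -/
noncomputable def scaledVariance : ℝ :=
  (∑ p ∈ s, u p * a p ^ 2) * (∑ p ∈ s, u p) - (∑ p ∈ s, u p * a p) ^ 2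

theorem scaledVariance_eq_sum_sum :
    scaledVariance s u a = (∑ p ∈ s, ∑ q ∈ s, u p * u q * (a p - a q) ^ 2) / 2 := by
  have hsymm : ∑ p ∈ s, ∑ q ∈ s, u p * u q * a q ^ 2 = ∑ p ∈ s, ∑ q ∈ s, u p * a p ^ 2 * u q := by
    rw [sum_comm]
    exact sum_congr rfl fun p _ => sum_congr rfl fun q _ => by ring
  have hexpand : ∑ p ∈ s, ∑ q ∈ s, u p * u q * (a p - a q) ^ 2
      = ∑ p ∈ s, ∑ q ∈ s, u p * a p ^ 2 * u q + ∑ p ∈ s, ∑ q ∈ s, u p * u q * a q ^ 2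
        - 2 * ∑ p ∈ s, ∑ q ∈ s, u p * a p * (u q * a q) := by
    simp only [mul_sum, ← sum_add_distrib, ← sum_sub_distrib]
    exact sum_congr rfl fun p _ => sum_congr rfl fun q _ => by ring
  rw [hexpand, hsymm, scaledVariance, sq (∑ p ∈ s, u p * a p), sum_mul_sum, sum_mul_sum]
  ring

theorem scaledVariance_nonneg (hu : ∀ p ∈ s, 0 ≤ u p) : 0 ≤ scaledVariance s u a := by
  rw [scaledVariance_eq_sum_sum]
  exact div_nonneg (sum_nonneg fun p hp => sum_nonneg fun q hq =>
    mul_nonneg (mul_nonneg (hu p hp) (hu q hq)) (sq_nonneg _)) zero_le_two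

theorem scaledVariance_pos_iff (hu : ∀ p ∈ s, 0 < u p) :
    0 < scaledVariance s u a ↔ ∃ p ∈ s, ∃ q ∈ s, a p ≠ a q := by
  have hterm : ∀ p ∈ s, ∀ q ∈ s, 0 ≤ u p * u q * (a p - a q) ^ 2 := fun p hp q hq =>
    mul_nonneg (mul_pos (hu p hp) (hu q hq)).le (sq_nonneg _)
  rw [scaledVariance_eq_sum_sum, div_pos_iff_of_pos_right two_pos,
    sum_pos_iff_of_nonneg fun p hp => sum_nonneg (hterm p hp)]
  refine exists_congr fun p => and_congr_right fun hp => ?_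
  rw [sum_pos_iff_of_nonneg (hterm p hp)]
  refine exists_congr fun q => and_congr_right fun hq => ?_
  rw [mul_pos_iff_of_pos_left (mul_pos (hu p hp) (hu q hq)), sq_pos_iff, sub_ne_zero]

end ScaledVariance

section ExpSum

variable {ι : Type*} (s : Finset ι) (w a : ι → ℝ)

noncomputable def expSum (θ : ℝ) : ℝ := ∑ p ∈ s, w p * exp (θ * a p)

theorem hasDerivAt_expSum (θ : ℝ) :
    HasDerivAt (expSum s w a) (expSum s (fun p => w p * a p) a θ) θ := by
  refine HasDerivAt.fun_sum fun p _ => ?_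
  exact (((hasDerivAt_mul_const (a p)).exp).const_mul (w p)).congr_deriv (by ring)

theorem expSum_of_eq_const {c : ℝ} (hc : ∀ p ∈ s, a p = c) (θ : ℝ) :
    expSum s w a θ = (∑ p ∈ s, w p) * exp (θ * c) := by
  rw [expSum, sum_mul]
  exact sum_congr rfl fun p hp => by rw [hc p hp]

variable {s w}

theorem expSum_pos (hw : ∀ p ∈ s, 0 < w p) (hs : s.Nonempty) (θ : ℝ) : 0 < expSum s w a θ :=
  sum_pos (fun p hp => mul_pos (hw p hp) (exp_pos _)) hs

theorem hasDerivAt_log_expSum (hw : ∀ p ∈ s, 0 < w p) (hs : s.Nonempty) (θ : ℝ) :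
    HasDerivAt (fun θ => log (expSum s w a θ))
      (expSum s (fun p => w p * a p) a θ / expSum s w a θ) θ :=
  (hasDerivAt_expSum s w a θ).log (expSum_pos a hw hs θ).ne'

theorem deriv_log_expSum (hw : ∀ p ∈ s, 0 < w p) (hs : s.Nonempty) :
    deriv (fun θ => log (expSum s w a θ))
      = fun θ => expSum s (fun p => w p * a p) a θ / expSum s w a θ :=
  funext fun θ => (hasDerivAt_log_expSum a hw hs θ).deriv

theorem expSum_mul_expSum_sub_sq (θ : ℝ) :
    expSum s (fun p => w p * a p * a p) a θ * expSum s w a θ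
        - expSum s (fun p => w p * a p) a θ ^ 2
      = scaledVariance s (fun p => w p * exp (θ * a p)) a := by
  unfold expSum scaledVariance
  congr 2
  · exact sum_congr rfl fun p _ => by ring
  · exact sum_congr rfl fun p _ => by ring

theorem deriv2_log_expSum (hw : ∀ p ∈ s, 0 < w p) (hs : s.Nonempty) (θ : ℝ) :
    deriv^[2] (fun θ => log (expSum s w a θ)) θ
      = scaledVariance s (fun p => w p * exp (θ * a p)) a / expSum s w a θ ^ 2 := by
  rw [Function.iterate_succ_apply, Function.iterate_one, deriv_log_expSum a hw hs,
    ((hasDerivAt_expSum s _ a θ).fun_div (hasDerivAt_expSum s w a θ)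
      (expSum_pos a hw hs θ).ne').deriv, ← expSum_mul_expSum_sub_sq]
  ring

end ExpSum

section LogExpSum

variable {ι : Type*} {s : Finset ι} {w : ι → ℝ} (a : ι → ℝ)

theorem differentiable_log_expSum (hw : ∀ p ∈ s, 0 < w p) (hs : s.Nonempty) :
    Differentiable ℝ (fun θ => log (expSum s w a θ)) :=
  fun θ => (hasDerivAt_log_expSum a hw hs θ).differentiableAt

theorem convexOn_log_expSum (hw : ∀ p ∈ s, 0 < w p) (hs : s.Nonempty) :
    ConvexOn ℝ Set.univ (fun θ => log (expSum s w a θ)) := by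
  refine convexOn_univ_of_deriv2_nonneg (differentiable_log_expSum a hw hs) ?_ fun θ => ?_
  · rw [deriv_log_expSum a hw hs]
    exact fun θ => ((hasDerivAt_expSum s _ a θ).fun_div (hasDerivAt_expSum s w a θ)
      (expSum_pos a hw hs θ).ne').differentiableAt
  · rw [deriv2_log_expSum a hw hs]
    exact div_nonneg
      (scaledVariance_nonneg s _ a fun p hp => (mul_pos (hw p hp) (exp_pos _)).le) (sq_nonneg _)

theorem strictConvexOn_log_expSum (hw : ∀ p ∈ s, 0 < w p) (hs : s.Nonempty)
    (ha : ∃ p ∈ s, ∃ q ∈ s, a p ≠ a q) :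
    StrictConvexOn ℝ Set.univ (fun θ => log (expSum s w a θ)) := by
  refine strictConvexOn_univ_of_deriv2_pos (differentiable_log_expSum a hw hs).continuous
    fun θ => ?_
  rw [deriv2_log_expSum a hw hs]
  refine div_pos ?_ (pow_pos (expSum_pos a hw hs θ) 2)
  exact (scaledVariance_pos_iff s _ a fun p hp => mul_pos (hw p hp) (exp_pos _)).2 ha

theorem not_strictConvexOn_affine {D : Set ℝ} (hD : D.Nontrivial) (b c : ℝ) :
    ¬ StrictConvexOn ℝ D (fun θ => b + θ * c) := by
  rintro ⟨-, hstrict⟩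
  obtain ⟨x, hx, y, hy, hxy⟩ := hD
  have := hstrict hx hy hxy one_half_pos one_half_pos (add_halves 1)
  simp only [smul_eq_mul] at this
  linarith

theorem strictConvexOn_log_expSum_iff {D : Set ℝ} (hD : Convex ℝ D) (hDnt : D.Nontrivial)
    (hw : ∀ p ∈ s, 0 < w p) (hs : s.Nonempty) :
    StrictConvexOn ℝ D (fun θ => log (expSum s w a θ)) ↔ ∃ p ∈ s, ∃ q ∈ s, a p ≠ a q := by
  refine ⟨fun hL => ?_, fun ha =>
    (strictConvexOn_log_expSum a hw hs ha).subset (Set.subset_univ D) hD⟩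
  by_contra! hconst
  obtain ⟨p₀, hp₀⟩ := hs
  have hmass : 0 < ∑ p ∈ s, w p := sum_pos hw ⟨p₀, hp₀⟩
  have hL_affine : (fun θ => log (expSum s w a θ)) = fun θ => log (∑ p ∈ s, w p) + θ * a p₀ := by
    funext θ
    rw [expSum_of_eq_const s w a fun p hp => hconst p hp p₀ hp₀,
      log_mul hmass.ne' (exp_pos _).ne', log_exp]
  exact not_strictConvexOn_affine hDnt _ _ (hL_affine ▸ hL)

end LogExpSum

theorem rpow_one_add_mul_rpow_neg {x y : ℝ} (hx : 0 < x) (hy : 0 < y) (θ : ℝ) :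
    x ^ (1 + θ) * y ^ (-θ) = x * exp (θ * log (x / y)) := by
  rw [rpow_def_of_pos hx, rpow_def_of_pos hy, ← exp_add, log_div hx.ne' hy.ne',
    show log x * (1 + θ) + log y * -θ = log x + θ * (log x - log y) by ring, exp_add, exp_log hx]

section JointDistribution

variable {𝒳 𝒴 : Type*} [Fintype 𝒳] [Fintype 𝒴] {P : 𝒳 × 𝒴 → ℝ} {Q : 𝒴 → ℝ}

variable (P) in
noncomputable def posSupport : Finset (𝒳 × 𝒴) := {p | 0 < P p}

theorem pos_of_mem_posSupport {p : 𝒳 × 𝒴} (hp : p ∈ posSupport P) : 0 < P p :=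
  (mem_filter.1 hp).2

theorem sum_sum_ite_pos (g : 𝒳 × 𝒴 → ℝ) :
    (∑ x, ∑ y, if 0 < P (x, y) then g (x, y) else 0) = ∑ p ∈ posSupport P, g p := by
  rw [posSupport, sum_filter, Fintype.sum_prod_type]

theorem sum_posSupport (hP0 : ∀ p, 0 ≤ P p) : ∑ p ∈ posSupport P, P p = ∑ p, P p :=
  sum_filter_of_ne fun p _ hp => (hP0 p).lt_of_ne' hp

theorem pos_snd_of_mem_posSupport (hP0 : ∀ p, 0 ≤ P p) (hQsupp : ∀ y, 0 < margY P y → 0 < Q y)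
    {p : 𝒳 × 𝒴} (hp : p ∈ posSupport P) : 0 < Q p.2 :=
  hQsupp p.2 <| (pos_of_mem_posSupport hp).trans_le <|
    single_le_sum (f := fun x => P (x, p.2)) (fun x _ => hP0 (x, p.2)) (mem_univ p.1)

theorem thetaCondRenyiQ_eq_neg_log_expSum (hP0 : ∀ p, 0 ≤ P p)
    (hQsupp : ∀ y, 0 < margY P y → 0 < Q y) :
    thetaCondRenyiQ P Q =
      -fun θ => log (expSum (posSupport P) P (fun p => log (P p / Q p.2)) θ) := by
  funext θ
  rw [thetaCondRenyiQ, sum_sum_ite_pos (fun p => P p ^ (1 + θ) * Q p.2 ^ (-θ)), Pi.neg_apply,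
    expSum]
  exact congrArg (- log ·) <| sum_congr rfl fun p hp =>
    rpow_one_add_mul_rpow_neg (pos_of_mem_posSupport hp) (pos_snd_of_mem_posSupport hP0 hQsupp hp) θ

theorem varLogQ_eq_scaledVariance (hP0 : ∀ p, 0 ≤ P p) (hP1 : ∑ p, P p = 1) :
    varLogQ P Q = scaledVariance (posSupport P) P (fun p => log (P p / Q p.2)) := by
  have hlog : ∀ p : 𝒳 × 𝒴, log (Q p.2 / P p) = -log (P p / Q p.2) := fun p => by
    rw [← inv_div, log_inv]
  rw [varLogQ, sum_sum_ite_pos (fun p => P p * log (Q p.2 / P p) ^ 2),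
    sum_sum_ite_pos (fun p => P p * log (Q p.2 / P p)), scaledVariance, sum_posSupport hP0, hP1]
  simp only [hlog, neg_sq, mul_neg, sum_neg_distrib]
  ring

end JointDistribution

theorem thetaCondRenyiQ_concave_iff_general {𝒳 𝒴 : Type*} [Fintype 𝒳] [Fintype 𝒴]
    (P : 𝒳 × 𝒴 → ℝ) (hP0 : ∀ p, 0 ≤ P p) (hP1 : ∑ p : 𝒳 × 𝒴, P p = 1)
    (Q : 𝒴 → ℝ) (hQsupp : ∀ y, 0 < margY P y → 0 < Q y) :
    ConcaveOn ℝ (Set.Ioi (-1 : ℝ)) (fun θ => thetaCondRenyiQ P Q θ)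
    ∧ (StrictConcaveOn ℝ (Set.Ioi (-1 : ℝ)) (fun θ => thetaCondRenyiQ P Q θ)
        ↔ 0 < varLogQ P Q) := by
  have hP : ∀ p ∈ posSupport P, 0 < P p := fun _ => pos_of_mem_posSupport
  have hs : (posSupport P).Nonempty :=
    nonempty_of_sum_ne_zero (((sum_posSupport hP0).trans hP1).symm ▸ one_ne_zero)
  rw [thetaCondRenyiQ_eq_neg_log_expSum hP0 hQsupp, varLogQ_eq_scaledVariance hP0 hP1,
    neg_concaveOn_iff, neg_strictConcaveOn_iff,
    strictConvexOn_log_expSum_iff _ (convex_Ioi _) (Set.Ioi_infinite _).nontrivial hP hs,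
    scaledVariance_pos_iff _ _ _ hP]
  exact ⟨(convexOn_log_expSum _ hP hs).subset (Set.subset_univ _) (convex_Ioi _), Iff.rfl⟩

theorem thetaCondRenyiQ_concave_iff {𝒳 𝒴 : Type*} [Fintype 𝒳] [Fintype 𝒴]
    (P : 𝒳 × 𝒴 → ℝ) (hP0 : ∀ p, 0 ≤ P p) (hP1 : ∑ p : 𝒳 × 𝒴, P p = 1)
    (Q : 𝒴 → ℝ) (hQ0 : ∀ y, 0 ≤ Q y) (hQ1 : ∑ y : 𝒴, Q y = 1)
    (hQsupp : ∀ y, 0 < margY P y → 0 < Q y) :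
    ConcaveOn ℝ (Set.Ioi (-1 : ℝ)) (fun θ => thetaCondRenyiQ P Q θ)
    ∧ (StrictConcaveOn ℝ (Set.Ioi (-1 : ℝ)) (fun θ => thetaCondRenyiQ P Q θ)
        ↔ 0 < varLogQ P Q) :=
  thetaCondRenyiQ_concave_iff_general P hP0 hP1 Q hQsupp
end

section
/- The function h(θ) := θ·H↑_{1+θ}(X|Y) = −(1+θ) log Σ_y [Σ_x P_XY(x,y)^{1+θ}]^{1/(1+θ)}, extended by h(0)=0, is concave on (−1,∞), and it is strictly concave on (−1,∞) if and only if V(X|Y) > 0. -/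
open Real Filter

/-- `θ · H↑_{1+θ}(X|Y) = -(1+θ) log Σ_y [Σ_x P(x,y)^{1+θ}]^{1/(1+θ)}`
(which equals `0` at `θ = 0`). -/
noncomputable def thetaCondRenyiUp {𝒳 𝒴 : Type*} [Fintype 𝒳] [Fintype 𝒴]
    (P : 𝒳 × 𝒴 → ℝ) (θ : ℝ) : ℝ :=
  -(1 + θ) * Real.log (∑ y : 𝒴, (∑ x : 𝒳, P (x, y) ^ (1 + θ)) ^ (1 / (1 + θ)))

/-- Conditional entropy `H(X|Y)`. -/
noncomputable def condEnt {𝒳 𝒴 : Type*} [Fintype 𝒳] [Fintype 𝒴]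
    (P : 𝒳 × 𝒴 → ℝ) : ℝ :=
  -∑ x : 𝒳, ∑ y : 𝒴,
    if 0 < P (x, y) then P (x, y) * Real.log (P (x, y) / margY P y) else 0

/-- Conditional varentropy `V(X|Y)`. -/
noncomputable def condVarEnt {𝒳 𝒴 : Type*} [Fintype 𝒳] [Fintype 𝒴]
    (P : 𝒳 × 𝒴 → ℝ) : ℝ :=
  (∑ x : 𝒳, ∑ y : 𝒴,
    if 0 < P (x, y) then P (x, y) * (Real.log (P (x, y) / margY P y)) ^ 2 else 0)
  - (condEnt P) ^ 2

/-!
With `s = 1 + θ` and `F(s) = ∑_y ‖P(·, y)‖_s`, the function is `-s log F(s)`. Hölder's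
inequality, applied inside each fiber (`∑_x P^(as+bt) ≤ (∑_x P^s)^a (∑_x P^t)^b`) and then across
the fibers, gives `F(as+bt)^(as+bt) ≤ F(s)^(as) F(t)^(bt)`, which is concavity in `θ`.
Equality in the first step makes every fiber constant on its support, and equality in the second
then forces `P(x|y)` to take a single value `c` on the whole support. That is exactly
`V(X|Y) = 0`, and then the function is the linear map `θ ↦ -θ log c`.
-/

open Real Finset

namespace Real

lemma rpow_mul_add_mul {x a b s t : ℝ} (hx : 0 ≤ x) (hst : a * s + b * t ≠ 0) :
    x ^ (a * s + b * t) = (x ^ s) ^ a * (x ^ t) ^ b := by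
  rw [← rpow_mul hx, ← rpow_mul hx, ← rpow_add' hx (by rwa [mul_comm s, mul_comm t])]
  ring_nf

lemma rpow_one_div_rpow_mul_rpow_one_div_rpow {A B a b s t r : ℝ} (hA : 0 ≤ A) (hB : 0 ≤ B)
    (hs : s ≠ 0) (ht : t ≠ 0) :
    (A ^ (1 / s)) ^ (a * s / r) * (B ^ (1 / t)) ^ (b * t / r) = (A ^ a * B ^ b) ^ (1 / r) := by
  rw [← rpow_mul hA, ← rpow_mul hB, mul_rpow (rpow_nonneg hA a) (rpow_nonneg hB b),
    ← rpow_mul hA, ← rpow_mul hB]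
  congr 2 <;> field_simp

variable {ι : Type*} {s : Finset ι} {u v : ι → ℝ} {α β : ℝ}

theorem sum_rpow_mul_rpow_le (hu : ∀ i ∈ s, 0 ≤ u i) (hv : ∀ i ∈ s, 0 ≤ v i)
    (hα : 0 < α) (hβ : 0 < β) (hαβ : α + β = 1) :
    ∑ i ∈ s, u i ^ α * v i ^ β ≤ (∑ i ∈ s, u i) ^ α * (∑ i ∈ s, v i) ^ β := by
  have hinv : ∀ {γ : ℝ} {w : ι → ℝ}, 0 < γ → (∀ i ∈ s, 0 ≤ w i) →
      ∑ i ∈ s, (w i ^ γ) ^ γ⁻¹ = ∑ i ∈ s, w i := fun hγ hw =>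
    sum_congr rfl fun i hi => rpow_rpow_inv (hw i hi) hγ.ne'
  simpa [hinv hα hu, hinv hβ hv] using
    inner_le_Lp_mul_Lq_of_nonneg s (HolderConjugate.inv_inv hα hβ hαβ)
      (fun i hi => rpow_nonneg (hu i hi) α) (fun i hi => rpow_nonneg (hv i hi) β)

theorem div_eq_div_of_sum_rpow_mul_rpow_eq (hu : ∀ i ∈ s, 0 ≤ u i) (hv : ∀ i ∈ s, 0 ≤ v i)
    (hα : 0 < α) (hβ : 0 < β) (hαβ : α + β = 1)
    (hU : 0 < ∑ i ∈ s, u i) (hV : 0 < ∑ i ∈ s, v i)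
    (heq : ∑ i ∈ s, u i ^ α * v i ^ β = (∑ i ∈ s, u i) ^ α * (∑ i ∈ s, v i) ^ β) :
    ∀ i ∈ s, u i / ∑ j ∈ s, u j = v i / ∑ j ∈ s, v j := by
  set U := ∑ j ∈ s, u j
  set V := ∑ j ∈ s, v j
  have hnorm : ∀ i ∈ s, 0 ≤ u i / U ∧ 0 ≤ v i / V := fun i hi =>
    ⟨div_nonneg (hu i hi) hU.le, div_nonneg (hv i hi) hV.le⟩
  have hamgm : ∀ i ∈ s, (u i / U) ^ α * (v i / V) ^ β ≤ α * (u i / U) + β * (v i / V) :=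
    fun i hi => geom_mean_le_arith_mean2_weighted hα.le hβ.le (hnorm i hi).1 (hnorm i hi).2 hαβ
  have hsum_amgm : ∑ i ∈ s, (α * (u i / U) + β * (v i / V)) = 1 := by
    rw [sum_add_distrib, ← mul_sum, ← mul_sum, ← sum_div, ← sum_div, div_self hU.ne',
      div_self hV.ne', mul_one, mul_one, hαβ]
  have hsum_gm : ∑ i ∈ s, (u i / U) ^ α * (v i / V) ^ β = 1 := by
    have hUV : 0 < U ^ α * V ^ β := by positivity
    calc ∑ i ∈ s, (u i / U) ^ α * (v i / V) ^ β
        = (∑ i ∈ s, u i ^ α * v i ^ β) / (U ^ α * V ^ β) := by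
          rw [sum_div]
          refine sum_congr rfl fun i hi => ?_
          rw [div_rpow (hu i hi) hU.le, div_rpow (hv i hi) hV.le]
          ring
      _ = 1 := by rw [heq, div_self hUV.ne']
  intro i hi
  have hterm := (sum_eq_sum_iff_of_le hamgm).1 (hsum_gm.trans hsum_amgm.symm) i hi
  exact (geom_mean_eq_arith_mean2_weighted_iff_of_pos hα hβ (hnorm i hi).1 (hnorm i hi).2
    hαβ).1 hterm

end Real

section Varentropy

/-- Every fiber `P(·|y)` is uniform on its support, with a support size `1 / c` common to all
`y`. -/
def CondProbConst {𝒳 𝒴 : Type*} [Fintype 𝒳] (P : 𝒳 × 𝒴 → ℝ) : Prop :=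
  ∃ c, 0 < c ∧ ∀ p, 0 < P p → P p = c * margY P p.2

lemma margY_pos {𝒳 𝒴 : Type*} [Fintype 𝒳] {P : 𝒳 × 𝒴 → ℝ} (hP0 : ∀ p, 0 ≤ P p) {x : 𝒳}
    {y : 𝒴} (h : 0 < P (x, y)) : 0 < margY P y :=
  sum_pos' (fun _ _ => hP0 _) ⟨x, mem_univ x, h⟩

variable {𝒳 𝒴 : Type*} [Fintype 𝒳] [Fintype 𝒴] {P : 𝒳 × 𝒴 → ℝ}

lemma condEnt_eq_neg_sum_support : condEnt P =
    -∑ p ∈ univ.filter (fun p => 0 < P p), P p * log (P p / margY P p.2) := by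
  rw [condEnt, sum_filter, Fintype.sum_prod_type]

lemma condVarEnt_eq_sum_support_sub : condVarEnt P =
    ∑ p ∈ univ.filter (fun p => 0 < P p), P p * log (P p / margY P p.2) ^ 2 -
      condEnt P ^ 2 := by
  rw [condVarEnt, sum_filter, Fintype.sum_prod_type]

lemma sum_support_eq_one (hP0 : ∀ p, 0 ≤ P p) (hP1 : ∑ p, P p = 1) :
    ∑ p ∈ univ.filter (fun p => 0 < P p), P p = 1 := by
  rw [sum_filter_of_ne fun p _ hp => (hP0 p).lt_of_ne' hp, hP1]

lemma condVarEnt_eq_sum_sq (hP0 : ∀ p, 0 ≤ P p) (hP1 : ∑ p, P p = 1) :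
    condVarEnt P = ∑ p ∈ univ.filter (fun p => 0 < P p),
      P p * (log (P p / margY P p.2) + condEnt P) ^ 2 := by
  have hH : ∑ p ∈ univ.filter (fun p => 0 < P p), P p * log (P p / margY P p.2) =
      -condEnt P := by
    rw [condEnt_eq_neg_sum_support, neg_neg]
  have hexpand : ∀ p ∈ univ.filter (fun p => 0 < P p),
      P p * (log (P p / margY P p.2) + condEnt P) ^ 2 =
        P p * log (P p / margY P p.2) ^ 2 +
          2 * condEnt P * (P p * log (P p / margY P p.2)) + condEnt P ^ 2 * P p :=
    fun p _ => by ring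
  rw [sum_congr rfl hexpand, sum_add_distrib, sum_add_distrib, ← mul_sum, ← mul_sum, hH,
    sum_support_eq_one hP0 hP1, condVarEnt_eq_sum_support_sub]
  ring

lemma condVarEnt_nonneg (hP0 : ∀ p, 0 ≤ P p) (hP1 : ∑ p, P p = 1) : 0 ≤ condVarEnt P := by
  rw [condVarEnt_eq_sum_sq hP0 hP1]
  exact sum_nonneg fun p _ => mul_nonneg (hP0 p) (sq_nonneg _)

lemma condProbConst_of_condVarEnt_eq_zero (hP0 : ∀ p, 0 ≤ P p) (hP1 : ∑ p, P p = 1)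
    (hV : condVarEnt P = 0) : CondProbConst P := by
  rw [condVarEnt_eq_sum_sq hP0 hP1,
    sum_eq_zero_iff_of_nonneg fun p _ => mul_nonneg (hP0 p) (sq_nonneg _)] at hV
  refine ⟨exp (-condEnt P), exp_pos _, fun p hp => ?_⟩
  have hlog : log (P p / margY P p.2) = -condEnt P := by
    have := hV p (mem_filter.2 ⟨mem_univ _, hp⟩)
    simp only [mul_eq_zero, hp.ne', false_or, pow_eq_zero_iff two_ne_zero] at this
    linarith
  have hY : 0 < margY P p.2 := margY_pos hP0 hp
  rw [← hlog, exp_log (div_pos hp hY), div_mul_cancel₀ _ hY.ne']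

lemma condVarEnt_eq_zero_of_condProbConst (hP0 : ∀ p, 0 ≤ P p) (hP1 : ∑ p, P p = 1)
    (hc : CondProbConst P) : condVarEnt P = 0 := by
  obtain ⟨c, hc0, hc⟩ := hc
  have hlog : ∀ p ∈ univ.filter (fun p => 0 < P p), log (P p / margY P p.2) = log c :=
    fun p hp => by
      have hp := (mem_filter.1 hp).2
      have hY : 0 < margY P p.2 := margY_pos hP0 hp
      rw [hc p hp, mul_div_cancel_right₀ _ hY.ne']
  have hH : condEnt P = -log c := by
    rw [condEnt_eq_neg_sum_support, sum_congr rfl fun p hp => by rw [hlog p hp], ← sum_mul,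
      sum_support_eq_one hP0 hP1, one_mul]
  rw [condVarEnt_eq_sum_sq hP0 hP1]
  exact sum_eq_zero fun p hp => by rw [hlog p hp, hH]; ring

end Varentropy

section Renyi

variable {𝒳 𝒴 : Type*} [Fintype 𝒳] {P : 𝒳 × 𝒴 → ℝ} {s t a b : ℝ}

noncomputable def fiberPowSum (P : 𝒳 × 𝒴 → ℝ) (s : ℝ) (y : 𝒴) : ℝ := ∑ x, P (x, y) ^ s

noncomputable def fiberNorm (P : 𝒳 × 𝒴 → ℝ) (s : ℝ) (y : 𝒴) : ℝ := fiberPowSum P s y ^ (1 / s)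

noncomputable def sumFiberNorm [Fintype 𝒴] (P : 𝒳 × 𝒴 → ℝ) (s : ℝ) : ℝ := ∑ y, fiberNorm P s y

lemma fiberPowSum_nonneg (hP0 : ∀ p, 0 ≤ P p) (s : ℝ) (y : 𝒴) : 0 ≤ fiberPowSum P s y :=
  sum_nonneg fun _ _ => rpow_nonneg (hP0 _) s

lemma fiberPowSum_pos (hP0 : ∀ p, 0 ≤ P p) {x : 𝒳} {y : 𝒴} (hx : 0 < P (x, y)) (s : ℝ) :
    0 < fiberPowSum P s y :=
  sum_pos' (fun _ _ => rpow_nonneg (hP0 _) s) ⟨x, mem_univ x, rpow_pos_of_pos hx s⟩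

lemma fiberNorm_nonneg (hP0 : ∀ p, 0 ≤ P p) (s : ℝ) (y : 𝒴) : 0 ≤ fiberNorm P s y :=
  rpow_nonneg (fiberPowSum_nonneg hP0 s y) _

lemma fiberPowSum_le (hP0 : ∀ p, 0 ≤ P p) (hs : 0 < s) (ht : 0 < t) (ha : 0 < a) (hb : 0 < b)
    (hab : a + b = 1) (y : 𝒴) :
    fiberPowSum P (a * s + b * t) y ≤ fiberPowSum P s y ^ a * fiberPowSum P t y ^ b := by
  simp only [fiberPowSum, rpow_mul_add_mul (hP0 _) (by positivity : a * s + b * t ≠ 0)]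
  exact sum_rpow_mul_rpow_le (fun _ _ => rpow_nonneg (hP0 _) s)
    (fun _ _ => rpow_nonneg (hP0 _) t) ha hb hab

lemma fiberNorm_le (hP0 : ∀ p, 0 ≤ P p) (hs : 0 < s) (ht : 0 < t) (ha : 0 < a)
    (hb : 0 < b) (hab : a + b = 1) (y : 𝒴) :
    fiberNorm P (a * s + b * t) y ≤
      fiberNorm P s y ^ (a * s / (a * s + b * t)) *
        fiberNorm P t y ^ (b * t / (a * s + b * t)) := by
  rw [fiberNorm, fiberNorm, fiberNorm, rpow_one_div_rpow_mul_rpow_one_div_rpow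
    (fiberPowSum_nonneg hP0 s y) (fiberPowSum_nonneg hP0 t y) hs.ne' ht.ne']
  exact rpow_le_rpow (fiberPowSum_nonneg hP0 _ y) (fiberPowSum_le hP0 hs ht ha hb hab y)
    (by positivity)

lemma fiber_eq_of_fiberPowSum_eq (hP0 : ∀ p, 0 ≤ P p) (hs : 0 < s) (ht : 0 < t) (ha : 0 < a)
    (hb : 0 < b) (hab : a + b = 1) (hst : s ≠ t) {y : 𝒴}
    (heq : fiberPowSum P (a * s + b * t) y = fiberPowSum P s y ^ a * fiberPowSum P t y ^ b)
    {x x' : 𝒳} (hx : 0 < P (x, y)) (hx' : 0 < P (x', y)) : P (x, y) = P (x', y) := by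
  have hpos := fiberPowSum_pos hP0 hx
  have hprop := div_eq_div_of_sum_rpow_mul_rpow_eq (s := univ) (u := fun x => P (x, y) ^ s)
    (v := fun x => P (x, y) ^ t) (fun _ _ => rpow_nonneg (hP0 _) s)
    (fun _ _ => rpow_nonneg (hP0 _) t) ha hb hab (hpos s) (hpos t)
    (by simpa only [fiberPowSum, rpow_mul_add_mul (hP0 _) (by positivity : a * s + b * t ≠ 0)]
      using heq)
  have hpow : ∀ x, 0 < P (x, y) → P (x, y) ^ (s - t) = fiberPowSum P s y / fiberPowSum P t y :=
    fun x hx => by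
      have h := hprop x (mem_univ x)
      change P (x, y) ^ s / fiberPowSum P s y = P (x, y) ^ t / fiberPowSum P t y at h
      rw [div_eq_div_iff (hpos s).ne' (hpos t).ne'] at h
      rw [rpow_sub hx, div_eq_div_iff (rpow_pos_of_pos hx t).ne' (hpos t).ne']
      linarith
  exact rpow_left_injOn (sub_ne_zero.2 hst) hx.le hx'.le ((hpow x hx).trans (hpow x' hx').symm)

lemma fiberNorm_of_eq_mul_margY (hP0 : ∀ p, 0 ≤ P p) {c : ℝ} (hc : 0 ≤ c) {y : 𝒴}
    (hPc : ∀ x, 0 < P (x, y) → P (x, y) = c * margY P y) (hs : 0 < s) :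
    fiberNorm P s y = c ^ (1 - 1 / s) * margY P y := by
  have hY : 0 ≤ margY P y := sum_nonneg fun _ _ => hP0 _
  have hterm : ∀ x, P (x, y) ^ s = P (x, y) * (c * margY P y) ^ (s - 1) := fun x => by
    rcases (hP0 (x, y)).lt_or_eq with hx | hx
    · rw [← hPc x hx, rpow_sub_one hx.ne']
      field_simp
    · rw [← hx, zero_rpow hs.ne', zero_mul]
  have hsum : fiberPowSum P s y = c ^ (s - 1) * margY P y ^ s := by
    have hYs : margY P y ^ s = margY P y * margY P y ^ (s - 1) := by
      rw [← rpow_one_add' hY (by simpa using hs.ne'), add_sub_cancel]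
    rw [fiberPowSum, sum_congr rfl fun x _ => hterm x, ← sum_mul, mul_rpow hc hY, hYs]
    change margY P y * _ = _
    ring
  rw [fiberNorm, hsum, mul_rpow (rpow_nonneg hc _) (rpow_nonneg hY _), ← rpow_mul hc, one_div,
    rpow_rpow_inv hY hs.ne']
  congr 2
  field_simp

variable [Fintype 𝒴]

lemma sum_fiberNorm_rpow_mul_rpow_le (hP0 : ∀ p, 0 ≤ P p) (hs : 0 < s) (ht : 0 < t)
    (ha : 0 < a) (hb : 0 < b) :
    ∑ y, fiberNorm P s y ^ (a * s / (a * s + b * t)) *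
        fiberNorm P t y ^ (b * t / (a * s + b * t)) ≤
      sumFiberNorm P s ^ (a * s / (a * s + b * t)) *
        sumFiberNorm P t ^ (b * t / (a * s + b * t)) :=
  sum_rpow_mul_rpow_le (fun y _ => fiberNorm_nonneg hP0 s y)
    (fun y _ => fiberNorm_nonneg hP0 t y) (by positivity) (by positivity)
    (by field_simp)

lemma sumFiberNorm_le (hP0 : ∀ p, 0 ≤ P p) (hs : 0 < s) (ht : 0 < t) (ha : 0 < a)
    (hb : 0 < b) (hab : a + b = 1) :
    sumFiberNorm P (a * s + b * t) ≤
      sumFiberNorm P s ^ (a * s / (a * s + b * t)) *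
        sumFiberNorm P t ^ (b * t / (a * s + b * t)) :=
  (sum_le_sum fun y _ => fiberNorm_le hP0 hs ht ha hb hab y).trans
    (sum_fiberNorm_rpow_mul_rpow_le hP0 hs ht ha hb)

lemma eq_of_sumFiberNorm_eq (hP0 : ∀ p, 0 ≤ P p) (hs : 0 < s) (ht : 0 < t) (ha : 0 < a)
    (hb : 0 < b) (hab : a + b = 1) (hFs : 0 < sumFiberNorm P s) (hFt : 0 < sumFiberNorm P t)
    (heq : sumFiberNorm P (a * s + b * t) =
      sumFiberNorm P s ^ (a * s / (a * s + b * t)) *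
        sumFiberNorm P t ^ (b * t / (a * s + b * t))) :
    (∀ y, fiberPowSum P (a * s + b * t) y = fiberPowSum P s y ^ a * fiberPowSum P t y ^ b) ∧
      ∀ y, fiberNorm P s y / sumFiberNorm P s =
        fiberNorm P t y / sumFiberNorm P t := by
  have hle₁ := sum_le_sum fun y (_ : y ∈ univ) => fiberNorm_le hP0 hs ht ha hb hab y
  have hle₂ := sum_fiberNorm_rpow_mul_rpow_le hP0 hs ht ha hb
  have heq₁ := le_antisymm hle₁ (hle₂.trans heq.ge)
  have heq₂ := le_antisymm hle₂ (heq.symm.le.trans hle₁)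
  constructor
  · intro y
    have hy := (sum_eq_sum_iff_of_le fun y _ => fiberNorm_le hP0 hs ht ha hb hab y).1
      heq₁ y (mem_univ y)
    rw [fiberNorm, fiberNorm, fiberNorm, rpow_one_div_rpow_mul_rpow_one_div_rpow
      (fiberPowSum_nonneg hP0 s y) (fiberPowSum_nonneg hP0 t y) hs.ne' ht.ne'] at hy
    exact rpow_left_injOn (by positivity) (fiberPowSum_nonneg hP0 _ y)
      (mul_nonneg (rpow_nonneg (fiberPowSum_nonneg hP0 s y) a)
        (rpow_nonneg (fiberPowSum_nonneg hP0 t y) b)) hy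
  · intro y
    exact div_eq_div_of_sum_rpow_mul_rpow_eq (fun y _ => fiberNorm_nonneg hP0 s y)
      (fun y _ => fiberNorm_nonneg hP0 t y) (by positivity) (by positivity)
      (by field_simp) hFs hFt heq₂ y (mem_univ y)

lemma condProbConst_of_fiberPowSum_eq (hP0 : ∀ p, 0 ≤ P p) (hs : 0 < s) (ht : 0 < t)
    (ha : 0 < a) (hb : 0 < b) (hab : a + b = 1) (hst : s ≠ t)
    (hfib : ∀ y, fiberPowSum P (a * s + b * t) y = fiberPowSum P s y ^ a * fiberPowSum P t y ^ b)
    (hnorm : ∀ y, fiberNorm P s y / sumFiberNorm P s =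
      fiberNorm P t y / sumFiberNorm P t)
    (hFs : 0 < sumFiberNorm P s) (hFt : 0 < sumFiberNorm P t) : CondProbConst P := by
  have he : 1 / t - 1 / s ≠ 0 := by
    rw [sub_ne_zero, one_div, one_div, Ne, inv_inj]
    exact hst.symm
  refine ⟨(sumFiberNorm P s / sumFiberNorm P t) ^ (1 / t - 1 / s)⁻¹, by positivity, ?_⟩
  rintro ⟨x, y⟩ hxy
  have hY : 0 < margY P y := margY_pos hP0 hxy
  set r := P (x, y) / margY P y with hr_def
  have hr : 0 < r := div_pos hxy hY
  have hPr : ∀ x', 0 < P (x', y) → P (x', y) = r * margY P y := fun x' hx' => by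
    rw [fiber_eq_of_fiberPowSum_eq hP0 hs ht ha hb hab hst (hfib y) hx' hxy, hr_def,
      div_mul_cancel₀ _ hY.ne']
  -- `r` is the common value of `P(·|y)` on the support of fiber `y`; the norm equality pins it
  -- down independently of `y`.
  have hpow : r ^ (1 / t - 1 / s) = sumFiberNorm P s / sumFiberNorm P t := by
    have h := hnorm y
    rw [fiberNorm_of_eq_mul_margY hP0 hr.le hPr hs,
      fiberNorm_of_eq_mul_margY hP0 hr.le hPr ht] at h
    rw [show 1 / t - 1 / s = (1 - 1 / s) - (1 - 1 / t) by ring, rpow_sub hr]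
    field_simp at h ⊢
    exact h
  show P (x, y) = _ * margY P y
  rw [← hpow, rpow_rpow_inv hr.le he, hr_def, div_mul_cancel₀ _ hY.ne']

lemma sumFiberNorm_pos (hP0 : ∀ p, 0 ≤ P p) (hP1 : ∑ p, P p = 1) (s : ℝ) :
    0 < sumFiberNorm P s := by
  obtain ⟨p, -, hp⟩ := exists_lt_of_sum_lt (by simp [hP1] : ∑ p : 𝒳 × 𝒴, (0 : ℝ) < ∑ p, P p)
  exact sum_pos' (fun y _ => fiberNorm_nonneg hP0 s y)
    ⟨p.2, mem_univ _, rpow_pos_of_pos (fiberPowSum_pos hP0 hp s) _⟩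

lemma sumFiberNorm_of_eq_mul_margY (hP0 : ∀ p, 0 ≤ P p) (hP1 : ∑ p, P p = 1) {c : ℝ}
    (hc : 0 ≤ c) (hPc : ∀ p, 0 < P p → P p = c * margY P p.2) (hs : 0 < s) :
    sumFiberNorm P s = c ^ (1 - 1 / s) := by
  have hmarg : ∑ y, margY P y = 1 := by
    rw [← hP1, Fintype.sum_prod_type_right]
    rfl
  rw [sumFiberNorm, sum_congr rfl fun y _ =>
    fiberNorm_of_eq_mul_margY hP0 hc (fun x hx => hPc (x, y) hx) hs, ← mul_sum, hmarg,
    mul_one]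

end Renyi

section ThetaRenyi

variable {𝒳 𝒴 : Type*} [Fintype 𝒳] [Fintype 𝒴] {P : 𝒳 × 𝒴 → ℝ} {θ₁ θ₂ a b : ℝ}

lemma thetaCondRenyiUp_eq (P : 𝒳 × 𝒴 → ℝ) (θ : ℝ) :
    thetaCondRenyiUp P θ = -(1 + θ) * log (sumFiberNorm P (1 + θ)) := rfl

lemma thetaCondRenyiUp_eq_mul_of_condProbConst (hP0 : ∀ p, 0 ≤ P p) (hP1 : ∑ p, P p = 1)
    (hc : CondProbConst P) : ∃ K, ∀ θ, -1 < θ → thetaCondRenyiUp P θ = K * θ := by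
  obtain ⟨c, hc0, hPc⟩ := hc
  refine ⟨-log c, fun θ hθ => ?_⟩
  have hθ' : 0 < 1 + θ := by linarith
  rw [thetaCondRenyiUp_eq, sumFiberNorm_of_eq_mul_margY hP0 hP1 hc0.le hPc hθ',
    log_rpow hc0]
  field_simp
  ring

lemma mul_thetaCondRenyiUp_add_mul (hP0 : ∀ p, 0 ≤ P p) (hP1 : ∑ p, P p = 1)
    (hθ₁ : -1 < θ₁) (hθ₂ : -1 < θ₂) (ha : 0 < a) (hb : 0 < b) :
    a * thetaCondRenyiUp P θ₁ + b * thetaCondRenyiUp P θ₂ =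
      -(a * (1 + θ₁) + b * (1 + θ₂)) * log
        (sumFiberNorm P (1 + θ₁) ^ (a * (1 + θ₁) / (a * (1 + θ₁) + b * (1 + θ₂))) *
          sumFiberNorm P (1 + θ₂) ^ (b * (1 + θ₂) / (a * (1 + θ₁) + b * (1 + θ₂)))) := by
  have hs : 0 < 1 + θ₁ := by linarith
  have ht : 0 < 1 + θ₂ := by linarith
  have hFs := sumFiberNorm_pos hP0 hP1 (1 + θ₁)
  have hFt := sumFiberNorm_pos hP0 hP1 (1 + θ₂)
  rw [thetaCondRenyiUp_eq, thetaCondRenyiUp_eq, log_mul (by positivity) (by positivity),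
    log_rpow hFs, log_rpow hFt]
  field_simp
  ring

lemma thetaCondRenyiUp_add_mul (hab : a + b = 1) :
    thetaCondRenyiUp P (a * θ₁ + b * θ₂) =
      -(a * (1 + θ₁) + b * (1 + θ₂)) * log (sumFiberNorm P (a * (1 + θ₁) + b * (1 + θ₂))) := by
  rw [thetaCondRenyiUp_eq, show 1 + (a * θ₁ + b * θ₂) = a * (1 + θ₁) + b * (1 + θ₂) by
    linear_combination -hab]

lemma thetaCondRenyiUp_mul_add_mul_le (hP0 : ∀ p, 0 ≤ P p) (hP1 : ∑ p, P p = 1)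
    (hθ₁ : -1 < θ₁) (hθ₂ : -1 < θ₂) (ha : 0 < a) (hb : 0 < b) (hab : a + b = 1) :
    a * thetaCondRenyiUp P θ₁ + b * thetaCondRenyiUp P θ₂ ≤
      thetaCondRenyiUp P (a * θ₁ + b * θ₂) := by
  have hs : 0 < 1 + θ₁ := by linarith
  have ht : 0 < 1 + θ₂ := by linarith
  rw [mul_thetaCondRenyiUp_add_mul hP0 hP1 hθ₁ hθ₂ ha hb, thetaCondRenyiUp_add_mul hab]
  exact mul_le_mul_of_nonpos_left
    (log_le_log (sumFiberNorm_pos hP0 hP1 _)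
      (sumFiberNorm_le hP0 hs ht ha hb hab))
    (by linarith [mul_pos ha hs, mul_pos hb ht])

lemma condProbConst_of_thetaCondRenyiUp_eq (hP0 : ∀ p, 0 ≤ P p) (hP1 : ∑ p, P p = 1)
    (hθ₁ : -1 < θ₁) (hθ₂ : -1 < θ₂) (hne : θ₁ ≠ θ₂) (ha : 0 < a) (hb : 0 < b)
    (hab : a + b = 1)
    (heq : a * thetaCondRenyiUp P θ₁ + b * thetaCondRenyiUp P θ₂ =
      thetaCondRenyiUp P (a * θ₁ + b * θ₂)) : CondProbConst P := by
  have hs : 0 < 1 + θ₁ := by linarith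
  have ht : 0 < 1 + θ₂ := by linarith
  have hFs := sumFiberNorm_pos hP0 hP1 (1 + θ₁)
  have hFt := sumFiberNorm_pos hP0 hP1 (1 + θ₂)
  rw [mul_thetaCondRenyiUp_add_mul hP0 hP1 hθ₁ hθ₂ ha hb, thetaCondRenyiUp_add_mul hab] at heq
  have hnorm := log_injOn_pos (Set.mem_Ioi.2 (by positivity))
    (Set.mem_Ioi.2 (sumFiberNorm_pos hP0 hP1 _))
    (mul_left_cancel₀ (by linarith [mul_pos ha hs, mul_pos hb ht]) heq)
  obtain ⟨hfib, hnorm⟩ := eq_of_sumFiberNorm_eq hP0 hs ht ha hb hab hFs hFt hnorm.symm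
  exact condProbConst_of_fiberPowSum_eq hP0 hs ht ha hb hab (by intro h; apply hne; linarith)
    hfib hnorm hFs hFt

end ThetaRenyi

theorem thetaCondRenyiUp_concave_iff {𝒳 𝒴 : Type*} [Fintype 𝒳] [Fintype 𝒴]
    (P : 𝒳 × 𝒴 → ℝ) (hP0 : ∀ p, 0 ≤ P p) (hP1 : ∑ p : 𝒳 × 𝒴, P p = 1) :
    ConcaveOn ℝ (Set.Ioi (-1 : ℝ)) (fun θ => thetaCondRenyiUp P θ)
    ∧ (StrictConcaveOn ℝ (Set.Ioi (-1 : ℝ)) (fun θ => thetaCondRenyiUp P θ)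
        ↔ 0 < condVarEnt P) := by
  refine ⟨concaveOn_iff_forall_pos.2 ⟨convex_Ioi _, fun θ₁ hθ₁ θ₂ hθ₂ a b ha hb hab =>
    thetaCondRenyiUp_mul_add_mul_le hP0 hP1 hθ₁ hθ₂ ha hb hab⟩, fun hstrict => ?_, fun hV => ?_⟩
  · by_contra hV
    have hV0 := le_antisymm (not_lt.1 hV) (condVarEnt_nonneg hP0 hP1)
    obtain ⟨K, hK⟩ := thetaCondRenyiUp_eq_mul_of_condProbConst hP0 hP1
      (condProbConst_of_condVarEnt_eq_zero hP0 hP1 hV0)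
    have hmid := hstrict.2 (show (0 : ℝ) ∈ Set.Ioi (-1) by norm_num)
      (show (2 : ℝ) ∈ Set.Ioi (-1) by norm_num) (by norm_num) (show (0 : ℝ) < 1 / 2 by norm_num)
      (show (0 : ℝ) < 1 / 2 by norm_num) (by norm_num)
    norm_num [hK] at hmid
    linarith
  · exact ⟨convex_Ioi _, fun θ₁ hθ₁ θ₂ hθ₂ hne a b ha hb hab =>
      (thetaCondRenyiUp_mul_add_mul_le hP0 hP1 hθ₁ hθ₂ ha hb hab).lt_of_ne fun heq =>
        hV.ne' (condVarEnt_eq_zero_of_condProbConst hP0 hP1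
          (condProbConst_of_thetaCondRenyiUp_eq hP0 hP1 hθ₁ hθ₂ hne ha hb hab heq))⟩
end

section
/- Fix θ ∈ (−1,0)∪(0,∞). Suppose there exist λ > 0 and v : 𝒳×𝒴 → ℝ with v(x,y) > 0 for all (x,y) such that Σ_{x,y} v(x,y)·W̃_θ((x,y)|(x',y')) = λ·v(x',y') for all (x',y'). Then for every initial distribution P_{X₁Y₁}, lim_{n→∞} (1/n)·H↓_{1+θ}(Xⁿ|Yⁿ) = −(1/θ)·log λ. -/
open Real Filter

/-- Joint distribution of a Markov chain of length `m+1` with initial distribution `P1`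
and transition matrix `W` (where `W p p'` is the probability of moving from `p'` to `p`). -/
noncomputable def chainProb {𝒳 𝒴 : Type*} (W : 𝒳 × 𝒴 → 𝒳 × 𝒴 → ℝ) (P1 : 𝒳 × 𝒴 → ℝ)
    (m : ℕ) (z : Fin (m + 1) → 𝒳 × 𝒴) : ℝ :=
  P1 (z 0) * ∏ i : Fin m, W (z i.succ) (z i.castSucc)

/-- `H↓_{1+θ}(Xⁿ|Yⁿ)` for the length-`(m+1)` Markov chain. -/
noncomputable def condRenyiDownChain {𝒳 𝒴 : Type*} [Fintype 𝒳] [Fintype 𝒴]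
    (W : 𝒳 × 𝒴 → 𝒳 × 𝒴 → ℝ) (P1 : 𝒳 × 𝒴 → ℝ) (θ : ℝ) (m : ℕ) : ℝ :=
  -(1 / θ) * Real.log (∑ z : Fin (m + 1) → 𝒳 × 𝒴,
    if 0 < chainProb W P1 m z then
      chainProb W P1 m z ^ (1 + θ) *
        (∑ xn : Fin (m + 1) → 𝒳, chainProb W P1 m fun i => (xn i, (z i).2)) ^ (-θ)
    else 0)

/-! Because `W` is non-hidden, the `𝒴`-marginal of the chain is itself a Markov chain with kernel
`W_Y`, so the summand of the Rényi sum factorizes along the path into tilted one-step weights: the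
sum is `q · W̃_θ^(n-1) · 1` for an explicit initial vector `q`. Sandwiching the all-ones vector
between two positive multiples of the eigenvector `v` gives `c₁ λⁿ ≤ sum ≤ c₂ λⁿ`, hence
`(1/n) log sum → log λ`. -/

open Finset

section PathSum

variable {S : Type*} [Fintype S]

lemma sum_tuple_succ_eq_sum_snoc {R : Type*} [AddCommMonoid R] {m : ℕ}
    (f : (Fin (m + 2) → S) → R) :
    ∑ z : Fin (m + 2) → S, f z = ∑ w : Fin (m + 1) → S, ∑ a : S, f (Fin.snoc w a) := by
  rw [← (Fin.snocEquiv fun _ => S).sum_comp, Fintype.sum_prod_type, Finset.sum_comm]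
  rfl

/-- `hᵀ Mᵐ q`, expanded as a sum over paths. -/
noncomputable def pathSum (M : S → S → ℝ) (q h : S → ℝ) (m : ℕ) : ℝ :=
  ∑ z : Fin (m + 1) → S, q (z 0) * (∏ i : Fin m, M (z i.succ) (z i.castSucc)) * h (z (Fin.last m))

lemma pathSum_zero (M : S → S → ℝ) (q h : S → ℝ) : pathSum M q h 0 = ∑ p, q p * h p := by
  rw [pathSum, ← (Equiv.funUnique (Fin 1) S).symm.sum_comp]
  simp

lemma pathSum_succ (M : S → S → ℝ) (q h : S → ℝ) (m : ℕ) :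
    pathSum M q h (m + 1) = pathSum M q (fun p' => ∑ p, h p * M p p') m := by
  rw [pathSum, sum_tuple_succ_eq_sum_snoc, pathSum]
  refine Finset.sum_congr rfl fun w _ => ?_
  rw [Finset.mul_sum]
  refine Finset.sum_congr rfl fun a _ => ?_
  rw [Fin.prod_univ_castSucc, ← Fin.castSucc_zero]
  simp only [Fin.succ_castSucc, Fin.snoc_castSucc, Fin.snoc_last, Fin.succ_last]
  ring

lemma pathSum_mono {M : S → S → ℝ} (hM : ∀ p p', 0 ≤ M p p') {q : S → ℝ} (hq : ∀ p, 0 ≤ q p)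
    {h₁ h₂ : S → ℝ} (hh : ∀ p, h₁ p ≤ h₂ p) (m : ℕ) : pathSum M q h₁ m ≤ pathSum M q h₂ m :=
  Finset.sum_le_sum fun _ _ =>
    mul_le_mul_of_nonneg_left (hh _) (mul_nonneg (hq _) (Finset.prod_nonneg fun _ _ => hM _ _))

lemma pathSum_const_mul (M : S → S → ℝ) (q h : S → ℝ) (c : ℝ) (m : ℕ) :
    pathSum M q (fun p => c * h p) m = c * pathSum M q h m := by
  rw [pathSum, pathSum, Finset.mul_sum]
  exact Finset.sum_congr rfl fun _ _ => by ring

lemma pathSum_eigenvector (M : S → S → ℝ) (q v : S → ℝ) {lam : ℝ}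
    (heig : ∀ p', ∑ p, v p * M p p' = lam * v p') (m : ℕ) :
    pathSum M q v m = lam ^ m * ∑ p, q p * v p := by
  induction m with
  | zero => rw [pathSum_zero, pow_zero, one_mul]
  | succ m ih =>
    rw [pathSum_succ, funext heig, pathSum_const_mul, ih, pow_succ]
    ring

lemma exists_pathSum_one_bounds {M : S → S → ℝ} (hM : ∀ p p', 0 ≤ M p p') {q : S → ℝ}
    (hq : ∀ p, 0 ≤ q p) {v : S → ℝ} (hv : ∀ p, 0 < v p) {lam : ℝ}
    (heig : ∀ p', ∑ p, v p * M p p' = lam * v p') (hqv : 0 < ∑ p, q p * v p) :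
    ∃ a b : ℝ, 0 < a ∧ 0 < b ∧
      ∀ m, a * lam ^ m ≤ pathSum M q (fun _ => 1) m ∧ pathSum M q (fun _ => 1) m ≤ b * lam ^ m := by
  have hS : (univ : Finset S).Nonempty := Finset.nonempty_of_sum_ne_zero hqv.ne'
  obtain ⟨pmin, -, hmin⟩ := Finset.exists_min_image univ v hS
  obtain ⟨pmax, -, hmax⟩ := Finset.exists_max_image univ v hS
  refine ⟨(v pmax)⁻¹ * ∑ p, q p * v p, (v pmin)⁻¹ * ∑ p, q p * v p,
    mul_pos (inv_pos.2 (hv pmax)) hqv, mul_pos (inv_pos.2 (hv pmin)) hqv, fun m => ⟨?_, ?_⟩⟩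
  · calc (v pmax)⁻¹ * (∑ p, q p * v p) * lam ^ m
          = pathSum M q (fun p => (v pmax)⁻¹ * v p) m := by
            rw [pathSum_const_mul, pathSum_eigenvector M q v heig]; ring
      _ ≤ pathSum M q (fun _ => 1) m := pathSum_mono hM hq (fun p => by
            rw [inv_mul_le_one₀ (hv pmax)]; exact hmax p (mem_univ p)) m
  · calc pathSum M q (fun _ => 1) m
          ≤ pathSum M q (fun p => (v pmin)⁻¹ * v p) m := pathSum_mono hM hq (fun p => by
            rw [le_inv_mul_iff₀ (hv pmin), mul_one]; exact hmin p (mem_univ p)) m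
      _ = (v pmin)⁻¹ * (∑ p, q p * v p) * lam ^ m := by
            rw [pathSum_const_mul, pathSum_eigenvector M q v heig]; ring

end PathSum

lemma tendsto_log_div_of_pow_bounds {s : ℕ → ℝ} {a b lam : ℝ} (ha : 0 < a) (hb : 0 < b)
    (hlam : 0 < lam) (hs : ∀ m, a * lam ^ m ≤ s m ∧ s m ≤ b * lam ^ m) :
    Tendsto (fun m : ℕ => 1 / ((m : ℝ) + 1) * log (s m)) atTop (nhds (log lam)) := by
  have affine : ∀ C, Tendsto (fun m : ℕ => 1 / ((m : ℝ) + 1) * (C + m * log lam)) atTop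
      (nhds (log lam)) := fun C => by
    have h := (tendsto_one_div_add_atTop_nhds_zero_nat.const_mul (C - log lam)).add_const (log lam)
    rw [mul_zero, zero_add] at h
    refine h.congr fun m => ?_
    field_simp
    ring
  have log_mul_pow : ∀ {c : ℝ}, 0 < c → ∀ m : ℕ, log (c * lam ^ m) = log c + m * log lam :=
    fun hc m => by rw [log_mul hc.ne' (by positivity), log_pow]
  refine tendsto_of_tendsto_of_tendsto_of_le_of_le (affine (log a)) (affine (log b))
    (fun m => ?_) (fun m => ?_) <;> refine mul_le_mul_of_nonneg_left ?_ (by positivity)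
  · rw [← log_mul_pow ha]
    exact log_le_log (by positivity) (hs m).1
  · rw [← log_mul_pow hb]
    exact log_le_log (lt_of_lt_of_le (by positivity) (hs m).1) (hs m).2

section Tilt

noncomputable def tilt (θ a b : ℝ) : ℝ := if 0 < a then a ^ (1 + θ) * b ^ (-θ) else 0

variable {θ : ℝ}

lemma tilt_nonneg (a : ℝ) {b : ℝ} (hb : 0 ≤ b) : 0 ≤ tilt θ a b := by
  unfold tilt
  split_ifs with ha
  · exact mul_nonneg (rpow_nonneg ha.le _) (rpow_nonneg hb _)
  · exact le_rfl

lemma tilt_pos {a b : ℝ} (ha : 0 < a) (hb : 0 < b) : 0 < tilt θ a b := by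
  rw [tilt, if_pos ha]
  exact mul_pos (rpow_pos_of_pos ha _) (rpow_pos_of_pos hb _)

lemma tilt_mul {a a' b b' : ℝ} (ha : 0 ≤ a) (ha' : 0 ≤ a') (hb : 0 ≤ b) (hb' : 0 ≤ b') :
    tilt θ (a * a') (b * b') = tilt θ a b * tilt θ a' b' := by
  rcases ha.eq_or_lt with rfl | ha
  · simp [tilt]
  rcases ha'.eq_or_lt with rfl | ha'
  · simp [tilt]
  rw [tilt, tilt, tilt, if_pos (mul_pos ha ha'), if_pos ha, if_pos ha', mul_rpow ha.le ha'.le,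
    mul_rpow hb hb']
  ring

lemma tilt_prod {ι : Type*} (s : Finset ι) {f g : ι → ℝ} (hf : ∀ i, 0 ≤ f i) (hg : ∀ i, 0 ≤ g i) :
    tilt θ (∏ i ∈ s, f i) (∏ i ∈ s, g i) = ∏ i ∈ s, tilt θ (f i) (g i) := by
  classical
  induction s using Finset.induction_on with
  | empty => simp [tilt]
  | insert i s hi ih =>
    rw [prod_insert hi, prod_insert hi, prod_insert hi,
      tilt_mul (hf i) (prod_nonneg fun _ _ => hf _) (hg i) (prod_nonneg fun _ _ => hg _), ih]

end Tilt

section Chain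

variable {𝒳 𝒴 : Type*}

lemma chainProb_succ (W : 𝒳 × 𝒴 → 𝒳 × 𝒴 → ℝ) (P1 : 𝒳 × 𝒴 → ℝ) (m : ℕ)
    (z : Fin (m + 2) → 𝒳 × 𝒴) :
    chainProb W P1 (m + 1) z =
      chainProb W P1 m (fun i => z i.castSucc) *
        W (z (Fin.last (m + 1))) (z (Fin.last m).castSucc) := by
  rw [chainProb, chainProb, Fin.prod_univ_castSucc]
  simp only [Fin.succ_castSucc, Fin.castSucc_zero, Fin.succ_last]
  ring

variable [Fintype 𝒳]

lemma sum_chainProb_fst_eq {W : 𝒳 × 𝒴 → 𝒳 × 𝒴 → ℝ} {WY : 𝒴 → 𝒴 → ℝ}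
    (hNH : ∀ (x' : 𝒳) (y y' : 𝒴), ∑ x : 𝒳, W (x, y) (x', y') = WY y y') (P1 : 𝒳 × 𝒴 → ℝ) :
    ∀ (m : ℕ) (y : Fin (m + 1) → 𝒴),
      ∑ xn : Fin (m + 1) → 𝒳, chainProb W P1 m (fun i => (xn i, y i)) =
        (∑ x, P1 (x, y 0)) * ∏ i : Fin m, WY (y i.succ) (y i.castSucc)
  | 0, y => by
    rw [← (Equiv.funUnique (Fin 1) 𝒳).symm.sum_comp]
    simp [chainProb]
  | m + 1, y => by
    rw [sum_tuple_succ_eq_sum_snoc]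
    simp_rw [chainProb_succ, Fin.snoc_castSucc, Fin.snoc_last, ← Finset.mul_sum, hNH,
      ← Finset.sum_mul, sum_chainProb_fst_eq hNH P1 m, Fin.prod_univ_castSucc, Fin.succ_last,
      Fin.succ_castSucc, Fin.castSucc_zero, mul_assoc]

variable [Fintype 𝒴]

lemma condRenyiDownChain_eq_neg_div_log_pathSum {W : 𝒳 × 𝒴 → 𝒳 × 𝒴 → ℝ}
    (hW0 : ∀ p p', 0 ≤ W p p') {WY : 𝒴 → 𝒴 → ℝ} (hWY0 : ∀ y y', 0 ≤ WY y y')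
    (hNH : ∀ (x' : 𝒳) (y y' : 𝒴), ∑ x : 𝒳, W (x, y) (x', y') = WY y y') (θ : ℝ)
    {P1 : 𝒳 × 𝒴 → ℝ} (hP0 : ∀ p, 0 ≤ P1 p) (m : ℕ) :
    condRenyiDownChain W P1 θ m =
      -(1 / θ) * log (pathSum (fun p p' => tilt θ (W p p') (WY p.2 p'.2))
        (fun p => tilt θ (P1 p) (∑ x, P1 (x, p.2))) (fun _ => 1) m) := by
  rw [condRenyiDownChain, pathSum]
  congr 2
  refine Finset.sum_congr rfl fun z _ => ?_
  change tilt θ (chainProb W P1 m z) _ = _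
  rw [chainProb, sum_chainProb_fst_eq hNH, mul_one,
    tilt_mul (hP0 _) (prod_nonneg fun _ _ => hW0 _ _) (sum_nonneg fun _ _ => hP0 _)
      (prod_nonneg fun _ _ => hWY0 _ _),
    tilt_prod _ (fun _ => hW0 _ _) (fun _ => hWY0 _ _)]

end Chain

theorem chain_condRenyiDown_rate_general {𝒳 𝒴 : Type*} [Fintype 𝒳] [Fintype 𝒴]
    (W : 𝒳 × 𝒴 → 𝒳 × 𝒴 → ℝ) (hW0 : ∀ p p', 0 ≤ W p p')
    (WY : 𝒴 → 𝒴 → ℝ)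
    (hNH : ∀ (x' : 𝒳) (y y' : 𝒴), ∑ x : 𝒳, W (x, y) (x', y') = WY y y')
    (θ : ℝ)
    (lam : ℝ) (hlam : 0 < lam) (v : 𝒳 × 𝒴 → ℝ) (hv_pos : ∀ p, 0 < v p)
    (heig : ∀ p' : 𝒳 × 𝒴,
      (∑ p : 𝒳 × 𝒴, v p *
        (if 0 < W p p' then W p p' ^ (1 + θ) * WY p.2 p'.2 ^ (-θ) else 0)) = lam * v p')
    (P1 : 𝒳 × 𝒴 → ℝ) (hP0 : ∀ p, 0 ≤ P1 p) (hP1 : ∑ p : 𝒳 × 𝒴, P1 p = 1) :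
    Tendsto (fun m : ℕ => (1 / ((m : ℝ) + 1)) * condRenyiDownChain W P1 θ m)
      atTop (nhds (-(1 / θ) * Real.log lam)) := by
  obtain ⟨p₀, -, hp₀⟩ : ∃ p ∈ univ, 0 < P1 p := exists_lt_of_sum_lt (by simp [hP1])
  have hWY0 : ∀ y y', 0 ≤ WY y y' := fun y y' => hNH p₀.1 y y' ▸ sum_nonneg fun _ _ => hW0 _ _
  have hPY0 : ∀ y, 0 ≤ ∑ x, P1 (x, y) := fun y => sum_nonneg fun _ _ => hP0 _
  have hPY_pos : 0 < ∑ x, P1 (x, p₀.2) :=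
    hp₀.trans_le (single_le_sum (f := fun x => P1 (x, p₀.2)) (fun _ _ => hP0 _) (mem_univ p₀.1))
  have hqv : 0 < ∑ p, tilt θ (P1 p) (∑ x, P1 (x, p.2)) * v p :=
    sum_pos' (fun p _ => mul_nonneg (tilt_nonneg _ (hPY0 _)) (hv_pos p).le)
      ⟨p₀, mem_univ _, mul_pos (tilt_pos hp₀ hPY_pos) (hv_pos p₀)⟩
  obtain ⟨a, b, ha, hb, hbounds⟩ := exists_pathSum_one_bounds
    (fun p p' => tilt_nonneg (W p p') (hWY0 p.2 p'.2)) (fun p => tilt_nonneg (P1 p) (hPY0 p.2))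
    hv_pos heig hqv
  refine ((tendsto_log_div_of_pow_bounds ha hb hlam hbounds).const_mul (-(1 / θ))).congr
    fun m => ?_
  rw [condRenyiDownChain_eq_neg_div_log_pathSum hW0 hWY0 hNH θ hP0]
  ring

theorem chain_condRenyiDown_rate {𝒳 𝒴 : Type*} [Fintype 𝒳] [Fintype 𝒴]
    (W : 𝒳 × 𝒴 → 𝒳 × 𝒴 → ℝ) (hW0 : ∀ p p', 0 ≤ W p p')
    (hW1 : ∀ p', ∑ p : 𝒳 × 𝒴, W p p' = 1)
    (WY : 𝒴 → 𝒴 → ℝ)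
    (hNH : ∀ (x' : 𝒳) (y y' : 𝒴), ∑ x : 𝒳, W (x, y) (x', y') = WY y y')
    (θ : ℝ) (hθ : θ ∈ Set.Ioo (-1 : ℝ) 0 ∪ Set.Ioi 0)
    (lam : ℝ) (hlam : 0 < lam) (v : 𝒳 × 𝒴 → ℝ) (hv_pos : ∀ p, 0 < v p)
    (heig : ∀ p' : 𝒳 × 𝒴,
      (∑ p : 𝒳 × 𝒴, v p *
        (if 0 < W p p' then W p p' ^ (1 + θ) * WY p.2 p'.2 ^ (-θ) else 0)) = lam * v p')
    (P1 : 𝒳 × 𝒴 → ℝ) (hP0 : ∀ p, 0 ≤ P1 p) (hP1 : ∑ p : 𝒳 × 𝒴, P1 p = 1) :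
    Tendsto (fun m : ℕ => (1 / ((m : ℝ) + 1)) * condRenyiDownChain W P1 θ m)
      atTop (nhds (-(1 / θ) * Real.log lam)) :=
  chain_condRenyiDown_rate_general W hW0 WY hNH θ lam hlam v hv_pos heig P1 hP0 hP1
end
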